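/- For every n ≥ 1 there exists a permutation network on n elements of length Σ_{i=1}^{n} ⌈log₂ i⌉. -/

import Mathlib

/-- The permutation of `ℕ` obtained by applying the transpositions in the list
in order (first element of the list applied first). -/
def netPerm (S : List (ℕ × ℕ)) : Equiv.Perm ℕ :=
  (S.map (fun p => Equiv.swap p.1 p.2)).reverse.prod

/-- `L` is a `t`-reachability network on the ground set `{1, …, n}`:
every entry is a transposition of two distinct points of `{1, …, n}`, and for every
choice of `t` distinct points `x 0, …, x (t-1)` of `{1, …, n}` there is a subsequence
of `L` whose composition (applied in order) maps `j + 1` to `x j` for `0 ≤ j < t`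
(i.e. maps the point `j` to `x_j` for `1 ≤ j ≤ t`). -/
def IsReachNet (n t : ℕ) (L : List (ℕ × ℕ)) : Prop :=
  (∀ p ∈ L, p.1 ∈ Finset.Icc 1 n ∧ p.2 ∈ Finset.Icc 1 n ∧ p.1 ≠ p.2) ∧
  ∀ x : Fin t → ℕ, (∀ j, x j ∈ Finset.Icc 1 n) → Function.Injective x →
    ∃ S : List (ℕ × ℕ), S.Sublist L ∧ ∀ j : Fin t, netPerm S (j.val + 1) = x j

/-- `L` is a permutation network on the ground set `{1, …, n}`: every entry is a
transposition of two distinct points of `{1, …, n}`, and every permutation of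
`{1, …, n}` (i.e. every permutation of `ℕ` fixing the complement of `{1, …, n}`)
is the composition, in order, of some subsequence of `L`. -/
def IsPermNet (n : ℕ) (L : List (ℕ × ℕ)) : Prop :=
  (∀ p ∈ L, p.1 ∈ Finset.Icc 1 n ∧ p.2 ∈ Finset.Icc 1 n ∧ p.1 ≠ p.2) ∧
  ∀ σ : Equiv.Perm ℕ, (∀ x : ℕ, x ∉ Finset.Icc 1 n → σ x = x) →
    ∃ S : List (ℕ × ℕ), S.Sublist L ∧ netPerm S = σ

/-!
Waksman's recursion. Split `n = a + b` with `a = ⌈n/2⌉`, `b = ⌊n/2⌋` and pair the position `x ≤ a`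
with `x + a`. The network is a layer of the `b` transpositions `(x, x + a)`, a network on the top
half `{1, …, a}`, one on the bottom half `{a + 1, …, n}`, and a layer of the `a - 1` transpositions
`(x, x + a)` with `x < a`. Its length `W n` obeys `W n = W a + W b + (n - 1)`, which is solved
by `∑ ⌈log₂ i⌉`.

To route `σ`, two-colour the points so that both members of every input pair `{x, x + a}`, and
both preimages under `σ` of every output pair, get different colours. This is possible since the
union of two matchings has no odd cycle, and the colouring may be normalised at one point, which
is why the last output pair needs no switch. The switches then send the points of one colour to
the top half, and the permutation left between the two layers preserves both halves, so it is
routed by the two recursive networks.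
-/

open Function Equiv Finset

theorem Equiv.Perm.apply_mem_of_forall_not_mem {α : Type*} {σ : Perm α} {s : Finset α}
    (hσ : ∀ x ∉ s, σ x = x) {x : α} (hx : x ∈ s) : σ x ∈ s := by
  by_contra h
  rw [σ.injective (hσ _ h)] at h
  exact h hx

theorem Equiv.Perm.ofSubtype_subtypePerm_not_mul_ofSubtype_subtypePerm {α : Type*}
    {p : α → Prop} [DecidablePred p] {μ : Perm α} (h : ∀ x, p (μ x) ↔ p x) :
    ofSubtype (μ.subtypePerm (p := fun x => ¬p x) fun x => not_congr (h x)) *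
      ofSubtype (μ.subtypePerm h) = μ := by
  have h' : ∀ x, ¬p (μ x) ↔ ¬p x := fun x => not_congr (h x)
  ext x
  by_cases hx : p x
  · rw [Perm.mul_apply, ofSubtype_subtypePerm_of_mem h hx,
      ofSubtype_subtypePerm_of_not_mem (p := fun x => ¬p x) h' (not_not.2 ((h x).2 hx))]
  · rw [Perm.mul_apply, ofSubtype_subtypePerm_of_not_mem h hx,
      ofSubtype_subtypePerm_of_mem (p := fun x => ¬p x) h' hx]

section Coloring

variable {α : Type*}

def IsAlternating (c : α → Bool) (f : α → α) : Prop :=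
  ∀ x, f x ≠ x → c (f x) = !c x

theorem IsAlternating.xor_const {c : α → Bool} {f : α → α} (h : IsAlternating c f) (b : Bool) :
    IsAlternating (fun x => xor (c x) b) f := fun x hx => by
  simp [h x hx]

section Contraction

variable [DecidableEq α] (ι κ : α → α) (p : α)

def dropPair (x : α) : α :=
  if x = p ∨ x = ι p then x else ι x

/-- Replaces the path `p₀ – p – q – q₀` (`κ`, `ι`, `κ` steps, `q = ι p`) by the single `κ`-step
`p₀ – q₀` of the same parity, so that an alternating colouring of the contracted pair extends
back to `p` and `q`. -/
def splicePair (x : α) : α :=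
  if x = p ∨ x = ι p then x
  else if κ x = p ∨ κ x = ι p then
    (if κ (ι (κ x)) = p ∨ κ (ι (κ x)) = ι p then x else κ (ι (κ x)))
  else κ x

variable {ι κ}

theorem involutive_dropPair (hι : Involutive ι) : Involutive (dropPair ι p) := by
  intro x
  unfold dropPair
  grind [Involutive]

theorem involutive_splicePair (hι : Involutive ι) (hκ : Involutive κ) :
    Involutive (splicePair ι κ p) := by
  intro x
  unfold splicePair
  grind [Involutive]

theorem exists_isAlternating_of_contract (hι : Involutive ι) (hκ : Involutive κ)
    {c : α → Bool} (hcι : IsAlternating c (dropPair ι p))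
    (hcκ : IsAlternating c (splicePair ι κ p)) :
    ∃ c : α → Bool, IsAlternating c ι ∧ IsAlternating c κ := by
  set q := ι p
  let cp : Bool := if κ p ≠ p ∧ κ p ≠ q then !c (κ p)
    else if κ q ≠ q ∧ κ q ≠ p then c (κ q) else true
  refine ⟨fun x => if x = p then cp else if x = q then !cp else c x, ?_, ?_⟩
  · intro x hx
    unfold IsAlternating dropPair at hcι
    grind [Involutive]
  · intro x hx
    unfold IsAlternating splicePair at hcκ
    grind [Involutive]

end Contraction

theorem isAlternating_decide_lt [LinearOrder α] {κ : α → α} (hκ : Involutive κ) :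
    IsAlternating (fun x => decide (x < κ x)) κ := by
  intro x hx
  simp only [hκ x]
  rcases lt_or_gt_of_ne hx with h | h <;> simp [h, not_lt.2 h.le]

theorem exists_isAlternating [LinearOrder α] (s : Finset α) {ι κ : α → α} (hι : Involutive ι)
    (hκ : Involutive κ) (hs : ∀ x, ι x ≠ x → x ∈ s) :
    ∃ c : α → Bool, IsAlternating c ι ∧ IsAlternating c κ := by
  induction s using Finset.strongInduction generalizing ι κ with
  | H s ih =>
    by_cases hmoved : ∃ p, ι p ≠ p
    · obtain ⟨p, hp⟩ := hmoved
      have hsub : (s.erase p).erase (ι p) ⊂ s :=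
        (erase_subset _ _).trans_ssubset (erase_ssubset (hs p hp))
      obtain ⟨c, hcι, hcκ⟩ := ih _ hsub (involutive_dropPair p hι)
        (involutive_splicePair p hι hκ) (fun x hx => by
          unfold dropPair at hx
          simp only [mem_erase]
          grind)
      exact exists_isAlternating_of_contract p hι hκ hcι hcκ
    · simp only [not_exists, not_not] at hmoved
      exact ⟨_, fun x hx => (hx (hmoved x)).elim, isAlternating_decide_lt hκ⟩

end Coloring

theorem netPerm_cons (p : ℕ × ℕ) (S : List (ℕ × ℕ)) :
    netPerm (p :: S) = netPerm S * swap p.1 p.2 := by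
  simp [netPerm]

theorem netPerm_append (S T : List (ℕ × ℕ)) : netPerm (S ++ T) = netPerm T * netPerm S := by
  simp [netPerm]

theorem netPerm_apply_of_forall_ne {S : List (ℕ × ℕ)} {x : ℕ}
    (h : ∀ p ∈ S, p.1 ≠ x ∧ p.2 ≠ x) : netPerm S x = x := by
  induction S with
  | nil => rfl
  | cons p S ih =>
    obtain ⟨h1, h2⟩ := h p List.mem_cons_self
    rw [netPerm_cons, Perm.mul_apply, swap_apply_of_ne_of_ne h1.symm h2.symm]
    exact ih fun q hq => h q (List.mem_cons_of_mem p hq)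

def pairSwaps (a : ℕ) (l : List ℕ) : List (ℕ × ℕ) :=
  l.map fun x => (x, x + a)

section PairSwaps

variable {a : ℕ} {l : List ℕ}

theorem netPerm_pairSwaps_of_not_mem {x : ℕ} (hx : x ∉ l) (hxa : ∀ y ∈ l, y + a ≠ x) :
    netPerm (pairSwaps a l) x = x :=
  netPerm_apply_of_forall_ne fun p hp => by
    obtain ⟨y, hy, rfl⟩ := List.mem_map.1 hp
    exact ⟨fun h => hx (h ▸ hy), hxa y hy⟩

variable (hl : l.Nodup) (hspread : ∀ x ∈ l, ∀ y ∈ l, x < y + a)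
include hl hspread

theorem netPerm_pairSwaps_of_mem {x : ℕ} (hx : x ∈ l) :
    netPerm (pairSwaps a l) x = x + a ∧ netPerm (pairSwaps a l) (x + a) = x := by
  induction l with
  | nil => simp at hx
  | cons y l ih =>
    obtain ⟨hy, hl⟩ := List.nodup_cons.1 hl
    have hspread' := fun u hu v hv =>
      hspread u (List.mem_cons_of_mem y hu) v (List.mem_cons_of_mem y hv)
    have hya : ∀ z ∈ l, z < y + a := fun z hz =>
      hspread z (List.mem_cons_of_mem y hz) y List.mem_cons_self
    have hay : ∀ z ∈ l, y < z + a := fun z hz =>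
      hspread y List.mem_cons_self z (List.mem_cons_of_mem y hz)
    simp only [pairSwaps, List.map_cons, netPerm_cons, Perm.mul_apply] at ih ⊢
    rcases List.mem_cons.1 hx with rfl | hx
    · rw [swap_apply_left, swap_apply_right]
      refine ⟨netPerm_pairSwaps_of_not_mem (fun h => (hya _ h).false) ?_,
        netPerm_pairSwaps_of_not_mem hy fun z hz h => (hay z hz).ne' h⟩
      exact fun z hz h => hy (Nat.add_right_cancel h ▸ hz)
    · have hxy : x ≠ y := fun h => hy (h ▸ hx)
      have h1 := hay x hx
      have h2 : x + a ≠ y + a := by omega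
      rw [swap_apply_of_ne_of_ne hxy (hya x hx).ne, swap_apply_of_ne_of_ne h1.ne' h2]
      exact ih hl hspread' hx

theorem involutive_netPerm_pairSwaps : Involutive (netPerm (pairSwaps a l)) := by
  intro x
  by_cases hx : x ∈ l
  · rw [(netPerm_pairSwaps_of_mem hl hspread hx).1, (netPerm_pairSwaps_of_mem hl hspread hx).2]
  by_cases hxa : ∃ y ∈ l, y + a = x
  · obtain ⟨y, hy, rfl⟩ := hxa
    rw [(netPerm_pairSwaps_of_mem hl hspread hy).2, (netPerm_pairSwaps_of_mem hl hspread hy).1]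
  · simp only [not_exists, not_and] at hxa
    rw [netPerm_pairSwaps_of_not_mem hx hxa, netPerm_pairSwaps_of_not_mem hx hxa]

end PairSwaps

theorem exists_sublist_pairSwaps_apply_le_iff (o a k : ℕ) (hk : k ≤ a) (top : ℕ → Bool)
    (hpair : ∀ x ∈ Icc (o + 1) (o + a), top (x + a) = !top x)
    (htop : ∀ x, o + k < x → x ≤ o + a → top x = true) :
    ∃ S, S.Sublist (pairSwaps a (List.range' (o + 1) k)) ∧ Involutive (netPerm S) ∧
      (∀ x ∉ Icc (o + 1) (o + a + k), netPerm S x = x) ∧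
      ∀ x ∈ Icc (o + 1) (o + 2 * a), (netPerm S x ≤ o + a ↔ top x = true) := by
  set l := (List.range' (o + 1) k).filter fun x => !top x
  have hl : l.Nodup := (List.nodup_range' ..).filter _
  have hbound : ∀ y ∈ l, o + 1 ≤ y ∧ y ≤ o + k := fun y hy => by
    have := List.mem_range'_1.1 (List.mem_filter.1 hy).1
    omega
  have hspread : ∀ x ∈ l, ∀ y ∈ l, x < y + a := fun x hx y hy => by
    have := hbound x hx; have := hbound y hy; omega
  have hmem : ∀ y ∈ Icc (o + 1) (o + a), y ∈ l ↔ top y = false := fun y hy => by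
    rw [mem_Icc] at hy
    simp only [l, List.mem_filter, List.mem_range'_1, Bool.not_eq_eq_eq_not, Bool.not_true,
      and_iff_right_iff_imp]
    intro hy'
    by_contra hyk
    rw [htop y (by omega) hy.2] at hy'
    exact Bool.noConfusion hy'
  refine ⟨pairSwaps a l, List.filter_sublist.map _,
    involutive_netPerm_pairSwaps hl hspread, fun x hx => ?_, fun x hx => ?_⟩
  · rw [mem_Icc] at hx
    refine netPerm_pairSwaps_of_not_mem (fun h => hx ?_) fun y hy h => hx ?_
    · have := hbound x h; omega
    · have := hbound y hy; omega
  · rw [mem_Icc] at hx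
    by_cases hxa : x ≤ o + a
    · have hx' := hmem x (mem_Icc.2 ⟨hx.1, hxa⟩)
      by_cases hxl : x ∈ l
      · rw [(netPerm_pairSwaps_of_mem hl hspread hxl).1, hx'.1 hxl]
        simp only [Bool.false_eq_true, iff_false]
        omega
      · rw [netPerm_pairSwaps_of_not_mem hxl fun y hy h => by have := hbound y hy; omega]
        simp only [hxa, true_iff]
        simpa [hx'] using hxl
    · obtain ⟨y, rfl⟩ : ∃ y, x = y + a := ⟨x - a, by omega⟩
      have hy : y ∈ Icc (o + 1) (o + a) := mem_Icc.2 (by omega)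
      rw [hpair y hy]
      by_cases hyl : y ∈ l
      · rw [(netPerm_pairSwaps_of_mem hl hspread hyl).2, (hmem y hy).1 hyl]
        simp only [Bool.not_false, iff_true]
        omega
      · have hxl : y + a ∉ l := fun h => by have := hbound _ h; omega
        rw [netPerm_pairSwaps_of_not_mem hxl fun z hz h => hyl (Nat.add_right_cancel h ▸ hz)]
        simp only [hxa, false_iff, Bool.not_eq_true', Bool.not_eq_false]
        simpa [hmem y hy] using hyl

def IsPermNetOn (s : Finset ℕ) (L : List (ℕ × ℕ)) : Prop :=
  (∀ p ∈ L, p.1 ∈ s ∧ p.2 ∈ s ∧ p.1 ≠ p.2) ∧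
  ∀ σ : Perm ℕ, (∀ x ∉ s, σ x = x) → ∃ S : List (ℕ × ℕ), S.Sublist L ∧ netPerm S = σ

theorem isPermNetOn_nil {s : Finset ℕ} (hs : s.card ≤ 1) : IsPermNetOn s [] := by
  refine ⟨by simp, fun σ hσ => ⟨[], List.Sublist.refl _, Perm.ext fun x => ?_⟩⟩
  by_cases hx : x ∈ s
  · exact card_le_one.1 hs _ hx _ (σ.apply_mem_of_forall_not_mem hσ hx)
  · exact (hσ x hx).symm

theorem exists_waksman_coloring {o a b : ℕ} (hba : b ≤ a) (hab : a ≤ b + 1) {σ : Perm ℕ}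
    (hσ : ∀ x ∉ Icc (o + 1) (o + a + b), σ x = x) :
    ∃ c : ℕ → Bool, (∀ x ∈ Icc (o + 1) (o + a), c (x + a) = !c x) ∧
      (∀ x ∈ Icc (o + 1) (o + a), c (σ⁻¹ (x + a)) = !c (σ⁻¹ x)) ∧
      c (σ⁻¹ (o + a)) = true ∧ ∀ x, o + b < x → x ≤ o + a → c x = true := by
  -- `ι` pairs `x` with `x + a` for every `x ∈ (o, o + a]`, including the switchless pair
  -- `{o + a, o + 2a}`; when `b < a` the point `o + 2a` is a phantom, fixed by `σ`.
  set ι := netPerm (pairSwaps a (List.range' (o + 1) a))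
  have hl := List.nodup_range' (s := o + 1) (n := a)
  have hspread : ∀ x ∈ List.range' (o + 1) a, ∀ y ∈ List.range' (o + 1) a, x < y + a := by
    simp only [List.mem_range'_1]
    omega
  have hι : ∀ x ∈ Icc (o + 1) (o + a), ι x = x + a := fun x hx => by
    refine (netPerm_pairSwaps_of_mem hl hspread ?_).1
    simp only [mem_Icc, List.mem_range'_1] at hx ⊢
    omega
  have hιsupp : ∀ x, ι x ≠ x → x ∈ Icc (o + 1) (o + 2 * a) := by
    intro x hx
    by_contra h
    refine hx (netPerm_pairSwaps_of_not_mem ?_ ?_) <;>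
      simp only [mem_Icc, List.mem_range'_1, not_and_or, not_le, not_lt, ne_eq] at h ⊢ <;> omega
  have hιinv : Involutive ι := involutive_netPerm_pairSwaps hl hspread
  have hκinv : Involutive fun x => σ⁻¹ (ι (σ x)) := fun x => by
    simp only [Perm.coe_inv, apply_symm_apply, hιinv (σ x), symm_apply_apply]
  obtain ⟨c₀, hc₀ι, hc₀κ⟩ := exists_isAlternating _ hιinv hκinv hιsupp
  set c := fun x => xor (c₀ x) (!c₀ (σ⁻¹ (o + a)))
  have hcι := hc₀ι.xor_const (!c₀ (σ⁻¹ (o + a)))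
  have hcκ := hc₀κ.xor_const (!c₀ (σ⁻¹ (o + a)))
  have hpair : ∀ x ∈ Icc (o + 1) (o + a), c (x + a) = !c x := fun x hx => by
    rw [← hι x hx]
    exact hcι x (by rw [hι x hx]; simp only [mem_Icc] at hx; omega)
  have hpair' : ∀ x ∈ Icc (o + 1) (o + a), c (σ⁻¹ (x + a)) = !c (σ⁻¹ x) := fun x hx => by
    have h := hcκ (σ⁻¹ x)
    simp only [Perm.coe_inv, apply_symm_apply, hι x hx] at h
    refine h fun h' => ?_
    simp only [mem_Icc] at hx
    have := σ⁻¹.injective h'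
    omega
  have hu : c (σ⁻¹ (o + a)) = true := by simp [c]
  refine ⟨c, hpair, hpair', hu, fun x h1 h2 => ?_⟩
  obtain rfl : x = o + a := by omega
  have hfix : σ⁻¹ (o + a + a) = o + a + a := by
    rw [Perm.inv_eq_iff_eq]
    exact (hσ _ (by simp only [mem_Icc]; omega)).symm
  have h := hpair' (o + a) (by simp only [mem_Icc]; omega)
  rw [hfix, hu, hpair (o + a) (by simp only [mem_Icc]; omega)] at h
  simpa using h

theorem IsPermNetOn.exists_sublist_append {s t : Finset ℕ} {L₁ L₂ : List (ℕ × ℕ)}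
    (h₁ : IsPermNetOn s L₁) (h₂ : IsPermNetOn t L₂) {μ : Perm ℕ} (hμs : ∀ x, μ x ∈ s ↔ x ∈ s)
    (hμ : ∀ x ∉ s ∪ t, μ x = x) : ∃ S, S.Sublist (L₁ ++ L₂) ∧ netPerm S = μ := by
  have hμs' : ∀ x, μ x ∉ s ↔ x ∉ s := fun x => not_congr (hμs x)
  obtain ⟨S₁, hS₁, hπ⟩ := h₁.2 (Perm.ofSubtype (μ.subtypePerm hμs)) fun x hx =>
    Perm.ofSubtype_subtypePerm_of_not_mem hμs hx
  obtain ⟨S₂, hS₂, hρ⟩ := h₂.2 (Perm.ofSubtype (μ.subtypePerm hμs')) fun x hx => by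
    by_cases hxs : x ∈ s
    · exact Perm.ofSubtype_subtypePerm_of_not_mem (p := (· ∉ s)) hμs' (not_not.2 hxs)
    · rw [Perm.ofSubtype_subtypePerm_of_mem (p := (· ∉ s)) hμs' hxs]
      exact hμ x (by simp [hxs, hx])
  refine ⟨S₁ ++ S₂, hS₁.append hS₂, ?_⟩
  rw [netPerm_append, hπ, hρ, Perm.ofSubtype_subtypePerm_not_mul_ofSubtype_subtypePerm]

theorem IsPermNetOn.exists_sublist_waksman {o a b : ℕ} (hba : b ≤ a) (hab : a ≤ b + 1)
    {L₁ L₂ : List (ℕ × ℕ)} (h₁ : IsPermNetOn (Icc (o + 1) (o + a)) L₁)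
    (h₂ : IsPermNetOn (Icc (o + a + 1) (o + a + b)) L₂) {σ : Perm ℕ}
    (hσ : ∀ x ∉ Icc (o + 1) (o + a + b), σ x = x) :
    ∃ S, S.Sublist (pairSwaps a (List.range' (o + 1) b) ++ (L₁ ++ L₂) ++
        pairSwaps a (List.range' (o + 1) (a - 1))) ∧ netPerm S = σ := by
  obtain ⟨c, hcin, hcout, hcu, hctop⟩ := exists_waksman_coloring hba hab hσ
  obtain ⟨Sin, hSin, hαinv, hαfix, hα⟩ :=
    exists_sublist_pairSwaps_apply_le_iff o a b hba c hcin hctop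
  obtain ⟨Sout, hSout, hβinv, hβfix, hβ⟩ :=
    exists_sublist_pairSwaps_apply_le_iff o a (a - 1) (by omega) (fun y => c (σ⁻¹ y)) hcout
      fun x h₁ h₂ => by obtain rfl : x = o + a := (by omega); exact hcu
  set α := netPerm Sin
  set β := netPerm Sout
  set μ := β * σ * α with hμ
  have hαfix' : ∀ x ∉ Icc (o + 1) (o + a + b), α x = x := fun x hx =>
    hαfix x fun h => hx (by simp only [mem_Icc] at h ⊢; omega)
  have hβfix' : ∀ x ∉ Icc (o + 1) (o + a + b), β x = x := fun x hx =>
    hβfix x fun h => hx (by simp only [mem_Icc] at h ⊢; omega)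
  have hμfix : ∀ x ∉ Icc (o + 1) (o + a + b), μ x = x := fun x hx => by
    simp only [hμ, Perm.mul_apply, hαfix' x hx, hσ x hx, hβfix' x hx]
  have hμtop : ∀ x, μ x ∈ Icc (o + 1) (o + a) ↔ x ∈ Icc (o + 1) (o + a) := fun x => by
    by_cases hx : x ∈ Icc (o + 1) (o + a + b)
    · have hαx := α.apply_mem_of_forall_not_mem hαfix' hx
      have hσαx := σ.apply_mem_of_forall_not_mem hσ hαx
      have hμx := μ.apply_mem_of_forall_not_mem hμfix hx
      simp only [mem_Icc] at hx hαx hσαx hμx ⊢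
      have h : μ x ≤ o + a ↔ x ≤ o + a := by
        rw [hμ, Perm.mul_apply, Perm.mul_apply, hβ _ (by simp only [mem_Icc]; omega),
          Perm.coe_inv, symm_apply_apply, ← hα _ (by simp only [mem_Icc]; omega), hαinv x]
      omega
    · rw [hμfix x hx]
  obtain ⟨S, hS, hSμ⟩ := h₁.exists_sublist_append h₂ hμtop fun x hx =>
    hμfix x fun h => hx (by simp only [mem_union, mem_Icc] at h ⊢; omega)
  refine ⟨Sin ++ S ++ Sout, (hSin.append hS).append hSout, Perm.ext fun x => ?_⟩
  rw [netPerm_append, netPerm_append, hSμ]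
  change β (β (σ (α (α x)))) = σ x
  rw [hαinv x, hβinv]

theorem IsPermNetOn.waksman {o a b : ℕ} (hba : b ≤ a) (hab : a ≤ b + 1) {L₁ L₂ : List (ℕ × ℕ)}
    (h₁ : IsPermNetOn (Icc (o + 1) (o + a)) L₁)
    (h₂ : IsPermNetOn (Icc (o + a + 1) (o + a + b)) L₂) :
    IsPermNetOn (Icc (o + 1) (o + a + b))
      (pairSwaps a (List.range' (o + 1) b) ++ (L₁ ++ L₂) ++
        pairSwaps a (List.range' (o + 1) (a - 1))) := by
  refine ⟨fun p hp => ?_, fun σ hσ => h₁.exists_sublist_waksman hba hab h₂ hσ⟩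
  simp only [List.mem_append, pairSwaps, List.mem_map, List.mem_range'_1] at hp
  rcases hp with (⟨x, hx, rfl⟩ | hp | hp) | ⟨x, hx, rfl⟩
  · simp only [mem_Icc]; omega
  · have := h₁.1 p hp; simp only [mem_Icc] at this ⊢; omega
  · have := h₂.1 p hp; simp only [mem_Icc] at this ⊢; omega
  · simp only [mem_Icc]; omega

theorem sum_clog_Icc_eq (n : ℕ) :
    ∑ i ∈ Icc 1 n, Nat.clog 2 i =
      ∑ i ∈ Icc 1 ((n + 1) / 2), Nat.clog 2 i + ∑ i ∈ Icc 1 (n / 2), Nat.clog 2 i + (n - 1) := by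
  induction n with
  | zero => simp
  | succ n ih =>
    rcases Nat.eq_zero_or_pos n with rfl | hn
    · simp
    have hclog : Nat.clog 2 (n + 1) = Nat.clog 2 (n / 2 + 1) + 1 := by
      rw [Nat.clog_of_two_le one_lt_two (by omega)]
      congr 2
      omega
    rw [Finset.sum_Icc_succ_top (by omega), ih, hclog, show (n + 1 + 1) / 2 = n / 2 + 1 by omega,
      Finset.sum_Icc_succ_top (by omega : 1 ≤ n / 2 + 1)]
    omega

theorem exists_isPermNetOn_Icc (n o : ℕ) :
    ∃ L, IsPermNetOn (Icc (o + 1) (o + n)) L ∧ L.length = ∑ i ∈ Icc 1 n, Nat.clog 2 i := by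
  induction n using Nat.strong_induction_on generalizing o with
  | _ n ih =>
    rcases Nat.lt_or_ge n 2 with hn | hn
    · refine ⟨[], isPermNetOn_nil (by simp only [Nat.card_Icc]; omega), ?_⟩
      interval_cases n <;> simp
    obtain ⟨L₁, hL₁, hlen₁⟩ := ih ((n + 1) / 2) (by omega) o
    obtain ⟨L₂, hL₂, hlen₂⟩ := ih (n / 2) (by omega) (o + (n + 1) / 2)
    have hn' : o + n = o + (n + 1) / 2 + n / 2 := by omega
    refine ⟨_, hn' ▸ IsPermNetOn.waksman (by omega) (by omega) hL₁ hL₂, ?_⟩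
    simp only [List.length_append, pairSwaps, List.length_map, List.length_range', hlen₁, hlen₂]
    rw [sum_clog_Icc_eq n]
    omega

theorem exists_permutation_network_general (n : ℕ) :
    ∃ L : List (ℕ × ℕ), IsPermNet n L ∧
      L.length = ∑ i ∈ Finset.Icc 1 n, Nat.clog 2 i := by
  obtain ⟨L, hL, hlen⟩ := exists_isPermNetOn_Icc n 0
  rw [zero_add, zero_add] at hL
  exact ⟨L, hL, hlen⟩

/-- **Theorem 1 (Waksman; Beauquier–Darrot).** For every `n ≥ 1` there is a
permutation network on `n` elements using `∑_{i=1}^n ⌈log₂ i⌉` transpositions. -/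
theorem exists_permutation_network (n : ℕ) (hn : 1 ≤ n) :
    ∃ L : List (ℕ × ℕ), IsPermNet n L ∧
      L.length = ∑ i ∈ Finset.Icc 1 n, Nat.clog 2 i :=
  exists_permutation_network_general n
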